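/- Let σ > 0 and let a, b ∈ ℝ satisfy |a − b| ≤ 1. Then for every α ∈ (1,∞), the Rényi divergence of order α between the Gaussian measures N(a, σ²) and N(b, σ²) on ℝ is at most α/(2σ²). Hence the Gaussian mechanism, which releases q(D) + N(0, σ²) noise for a sensitivity-1 query q, satisfies (1/(2σ²))-zCDP. -/

import Mathlib

/-! The likelihood ratio of two Gaussians with a common variance `v` is the exponential of an
affine function of `x`. Hence `p_b · (p_a / p_b)^α` is, up to the constant factor
`exp (α (α - 1) (a - b)² / (2v))`, the Gaussian density centred at `α a + (1 - α) b`; integrating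
gives `D_α(N(a, v) ‖ N(b, v)) = α (a - b)² / (2v)`, which is at most `α / (2v)` when
`|a - b| ≤ 1`. -/

open MeasureTheory Real ProbabilityTheory

/-- Rényi divergence of order `α` between measures `P` and `Q` (with `P ≪ Q`):
`D_α(P‖Q) = (α−1)⁻¹ · log ∫ (dP/dQ)^α dQ`. -/
noncomputable def renyiDiv {Ω : Type*} [MeasurableSpace Ω] (α : ℝ) (P Q : Measure Ω) : ℝ :=
  (α - 1)⁻¹ * Real.log (∫ x, ((P.rnDeriv Q) x).toReal ^ α ∂Q)

open scoped ENNReal NNReal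

namespace ProbabilityTheory

variable {v : ℝ≥0}

lemma toReal_rnDeriv_gaussianReal_ae_eq (μ₁ μ₂ : ℝ) (hv : v ≠ 0) :
    (fun x ↦ ((gaussianReal μ₁ v).rnDeriv (gaussianReal μ₂ v) x).toReal)
      =ᵐ[gaussianReal μ₂ v] fun x ↦ gaussianPDFReal μ₁ v x / gaussianPDFReal μ₂ v x := by
  have h_ac := gaussianReal_absolutelyContinuous μ₂ hv
  filter_upwards [Measure.rnDeriv_eq_div (gaussianReal_absolutelyContinuous μ₁ hv) h_ac,
    h_ac (rnDeriv_gaussianReal μ₁ v), h_ac (rnDeriv_gaussianReal μ₂ v)] with x h h₁ h₂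
  rw [h, h₁, h₂, ENNReal.toReal_div, toReal_gaussianPDF, toReal_gaussianPDF]

lemma gaussianPDFReal_div_gaussianPDFReal (μ₁ μ₂ : ℝ) (hv : v ≠ 0) (x : ℝ) :
    gaussianPDFReal μ₁ v x / gaussianPDFReal μ₂ v x
      = exp ((-(x - μ₁) ^ 2 + (x - μ₂) ^ 2) / (2 * v)) := by
  have hc : (√(2 * π * v))⁻¹ ≠ 0 := by
    have : (0 : ℝ) < v := by positivity
    positivity
  simp only [gaussianPDFReal]
  rw [mul_div_mul_left _ _ hc, ← exp_sub]
  ring_nf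

lemma gaussianPDFReal_mul_div_rpow (μ₁ μ₂ : ℝ) (hv : v ≠ 0) (α x : ℝ) :
    gaussianPDFReal μ₂ v x * (gaussianPDFReal μ₁ v x / gaussianPDFReal μ₂ v x) ^ α
      = exp (α * (α - 1) * (μ₁ - μ₂) ^ 2 / (2 * v))
          * gaussianPDFReal (α * μ₁ + (1 - α) * μ₂) v x := by
  have hv' : (v : ℝ) ≠ 0 := NNReal.coe_ne_zero.mpr hv
  -- completing the square in `x`
  have h_exponent : -(x - μ₂) ^ 2 / (2 * v) + (-(x - μ₁) ^ 2 + (x - μ₂) ^ 2) / (2 * v) * α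
      = α * (α - 1) * (μ₁ - μ₂) ^ 2 / (2 * v)
          + -(x - (α * μ₁ + (1 - α) * μ₂)) ^ 2 / (2 * v) := by
    field_simp
    ring
  rw [gaussianPDFReal_div_gaussianPDFReal μ₁ μ₂ hv, ← exp_mul]
  simp only [gaussianPDFReal]
  rw [mul_assoc, ← exp_add, h_exponent, exp_add]
  ring

lemma integral_rpow_rnDeriv_gaussianReal (μ₁ μ₂ : ℝ) (hv : v ≠ 0) (α : ℝ) :
    ∫ x, ((gaussianReal μ₁ v).rnDeriv (gaussianReal μ₂ v) x).toReal ^ α ∂gaussianReal μ₂ v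
      = exp (α * (α - 1) * (μ₁ - μ₂) ^ 2 / (2 * v)) := calc
  _ = ∫ x, (gaussianPDFReal μ₁ v x / gaussianPDFReal μ₂ v x) ^ α ∂gaussianReal μ₂ v :=
    integral_congr_ae ((toReal_rnDeriv_gaussianReal_ae_eq μ₁ μ₂ hv).mono fun _ hx ↦
      congrArg (· ^ α) hx)
  _ = ∫ x, exp (α * (α - 1) * (μ₁ - μ₂) ^ 2 / (2 * v))
        * gaussianPDFReal (α * μ₁ + (1 - α) * μ₂) v x := by
    simp only [integral_gaussianReal_eq_integral_smul hv, smul_eq_mul,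
      gaussianPDFReal_mul_div_rpow μ₁ μ₂ hv α]
  _ = _ := by rw [integral_const_mul, integral_gaussianPDFReal_eq_one _ hv, mul_one]

end ProbabilityTheory

lemma renyiDiv_gaussianReal (μ₁ μ₂ : ℝ) {v : ℝ≥0} (hv : v ≠ 0) {α : ℝ} (hα : α ≠ 1) :
    renyiDiv α (gaussianReal μ₁ v) (gaussianReal μ₂ v) = α * (μ₁ - μ₂) ^ 2 / (2 * v) := by
  have hα' : α - 1 ≠ 0 := sub_ne_zero.mpr hα
  rw [renyiDiv, integral_rpow_rnDeriv_gaussianReal μ₁ μ₂ hv, log_exp]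
  field_simp

/-- Gaussian mechanism is `(1/(2σ²))`-zCDP: if `|a − b| ≤ 1` then for every `α ∈ (1,∞)`,
`D_α(N(a,σ²)‖N(b,σ²)) ≤ α/(2σ²)`. -/
theorem gaussian_mechanism_zcdp (σ a b : ℝ) (hσ : 0 < σ) (hab : |a - b| ≤ 1)
    (α : ℝ) (hα : 1 < α) :
    renyiDiv α (gaussianReal a ⟨σ ^ 2, sq_nonneg σ⟩) (gaussianReal b ⟨σ ^ 2, sq_nonneg σ⟩)
      ≤ α / (2 * σ ^ 2) := by
  set v : ℝ≥0 := ⟨σ ^ 2, sq_nonneg σ⟩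
  have hv_coe : (v : ℝ) = σ ^ 2 := rfl
  have hv : v ≠ 0 := by
    rw [← NNReal.coe_ne_zero, hv_coe]
    positivity
  rw [renyiDiv_gaussianReal a b hv hα.ne', hv_coe]
  have h_sq : (a - b) ^ 2 ≤ 1 := (sq_le_one_iff_abs_le_one _).mpr hab
  gcongr
  exact mul_le_of_le_one_right (by linarith) h_sq
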